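/- With the assumptions of the previous two settings combined, the root-mean-square error of the random batch estimator satisfies E[|(φ,f) - (φ,f_N^M)|²]^{1/2} ≤ √2·σ_φ/√N + √2·θ_φ·√(1/M - 1/N), where σ_φ² = Var_f(φ) and θ_φ² is the empirical variance of φ over the N samples. -/

import Mathlib

open MeasureTheory ProbabilityTheory

/-- Subadditivity of the square root. -/
theorem rbm_sqrt_add_le {a b : ℝ} (ha : 0 ≤ a) (hb : 0 ≤ b) :
    Real.sqrt (a + b) ≤ Real.sqrt a + Real.sqrt b := by
  have h1 := Real.sq_sqrt ha
  have h2 := Real.sq_sqrt hb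
  have h3 := Real.sqrt_nonneg a
  have h4 := Real.sqrt_nonneg b
  have h5 : a + b ≤ (Real.sqrt a + Real.sqrt b) ^ 2 := by nlinarith [mul_nonneg h3 h4]
  calc Real.sqrt (a + b) ≤ Real.sqrt ((Real.sqrt a + Real.sqrt b) ^ 2) := Real.sqrt_le_sqrt h5
    _ = Real.sqrt a + Real.sqrt b := Real.sqrt_sq (by positivity)

/-- RMSE of the full random batch estimator: i.i.d. samples plus an independent uniform
random `M`-subset of indices.  The RMSE of the batch average against the true expectation
is bounded by `√2 σ_φ/√N + √2 θ_φ √(1/M − 1/N)`, where `σ_φ² = Var_μ(φ)` and `θ_φ²` is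
the (mean) empirical variance of `φ` over the `N` samples. -/
theorem random_batch_method_rmse
    {Ω E : Type*} [MeasureSpace Ω] [IsProbabilityMeasure (ℙ : Measure Ω)]
    [MeasurableSpace E]
    (μ : Measure E) [IsProbabilityMeasure μ]
    (N M : ℕ) (hM : 0 < M) (hMN : M < N)
    (X : Fin N → Ω → E)
    (hXmeas : ∀ i, Measurable (X i))
    (hXindep : iIndepFun X ℙ)
    (hXlaw : ∀ i, Measure.map (X i) ℙ = μ)
    (S : Ω → Finset (Fin N))
    (hSmeas : @Measurable Ω (Finset (Fin N)) _ ⊤ S)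
    (hSval : ∀ ω, S ω ∈ Finset.powersetCard M (Finset.univ : Finset (Fin N)))
    (hSunif : ∀ s ∈ Finset.powersetCard M (Finset.univ : Finset (Fin N)),
      ℙ (S ⁻¹' {s}) = (((Finset.powersetCard M (Finset.univ : Finset (Fin N))).card : ENNReal))⁻¹)
    (hSindep : @IndepFun Ω (Finset (Fin N)) (Fin N → E) _ ⊤ _ S (fun ω i => X i ω) ℙ)
    (φ : E → ℝ) (hφ : MemLp φ 2 μ) :
    (∫ ω, |(∫ p, φ p ∂μ) - (M : ℝ)⁻¹ * ∑ j ∈ S ω, φ (X j ω)| ^ 2 ∂ℙ) ^ ((1 : ℝ) / 2)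
      ≤ Real.sqrt 2 * Real.sqrt (∫ p, (φ p - ∫ q, φ q ∂μ) ^ 2 ∂μ) / Real.sqrt N
        + Real.sqrt 2 *
          (∫ ω, (N : ℝ)⁻¹ * ∑ i, (φ (X i ω) - (N : ℝ)⁻¹ * ∑ j, φ (X j ω)) ^ 2 ∂ℙ) ^ ((1 : ℝ) / 2)
          * Real.sqrt ((M : ℝ)⁻¹ - (N : ℝ)⁻¹) := by
  classical
  have hMR : (0:ℝ) < (M:ℝ) := by exact_mod_cast hM
  have hNR : (0:ℝ) < (N:ℝ) := by exact_mod_cast hM.trans hMN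
  have hN2 : (2:ℝ) ≤ (N:ℝ) := by exact_mod_cast (by omega : 2 ≤ N)
  have hMNR : (M:ℝ) ≤ (N:ℝ) := by exact_mod_cast hMN.le
  -- measurable representative of φ
  set φm : E → ℝ := hφ.1.mk φ with hφm_def
  have hφm_sm : StronglyMeasurable φm := hφ.1.stronglyMeasurable_mk
  have hφm_meas : Measurable φm := hφm_sm.measurable
  have hφm_ae : φ =ᵐ[μ] φm := hφ.1.ae_eq_mk
  have hφm : MemLp φm 2 μ := hφ.ae_eq hφm_ae
  set m : ℝ := ∫ p, φm p ∂μ with hm_def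
  have hm_eq : (∫ p, φ p ∂μ) = m := integral_congr_ae hφm_ae
  set σ2 : ℝ := ∫ p, (φm p - m) ^ 2 ∂μ with hσ2_def
  have hσ2_nonneg : 0 ≤ σ2 := integral_nonneg fun p => sq_nonneg _
  have hσ2_eq : (∫ p, (φ p - ∫ q, φ q ∂μ) ^ 2 ∂μ) = σ2 := by
    rw [hm_eq]
    exact integral_congr_ae (hφm_ae.mono fun p hp => by simp only [hp])
  -- centered variables
  set Y : Fin N → Ω → ℝ := fun i ω => φm (X i ω) - m with hY_def
  have hY_meas : ∀ i, Measurable (Y i) := fun i =>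
    (hφm_meas.comp (hXmeas i)).sub measurable_const
  have hφmX_mem : ∀ i, MemLp (fun ω => φm (X i ω)) 2 ℙ := by
    intro i
    have h1 : MemLp φm 2 (Measure.map (X i) ℙ) := by rw [hXlaw i]; exact hφm
    exact (memLp_map_measure_iff hφm_sm.aestronglyMeasurable (hXmeas i).aemeasurable).1 h1
  have hY_mem : ∀ i, MemLp (Y i) 2 ℙ := fun i => (hφmX_mem i).sub (memLp_const m)
  have hY_mean : ∀ i, ∫ ω, Y i ω ∂ℙ = 0 := by
    intro i
    have h1 : ∫ ω, φm (X i ω) ∂ℙ = m := by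
      rw [hm_def, ← hXlaw i,
        integral_map (hXmeas i).aemeasurable hφm_sm.aestronglyMeasurable]
    have h2 : ∫ ω, Y i ω ∂ℙ = (∫ ω, φm (X i ω) ∂ℙ) - ∫ _ω, m ∂ℙ :=
      integral_sub ((hφmX_mem i).integrable one_le_two) (integrable_const m)
    rw [h2, h1]
    simp
  have hY_sq : ∀ i, ∫ ω, Y i ω ^ 2 ∂ℙ = σ2 := by
    intro i
    rw [hσ2_def, ← hXlaw i,
      integral_map (f := fun p => (φm p - m) ^ 2) (hXmeas i).aemeasurable
        ((hφm_meas.sub measurable_const).pow_const 2).aestronglyMeasurable]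
  have hYY_int : ∀ i j : Fin N, Integrable (fun ω => Y i ω * Y j ω) ℙ := by
    intro i j
    have h1 : MemLp (Y i • Y j) 1 ℙ :=
      MemLp.smul (hY_mem j) (hY_mem i)
    have h2 := h1.integrable le_rfl
    exact h2
  have hYY_zero : ∀ i j, i ≠ j → ∫ ω, Y i ω * Y j ω ∂ℙ = 0 := by
    intro i j hij
    have hind : IndepFun (Y i) (Y j) ℙ := by
      have h := (hXindep.indepFun hij).comp
        (φ := fun e => φm e - m) (ψ := fun e => φm e - m)
        (hφm_meas.sub measurable_const) (hφm_meas.sub measurable_const)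
      exact h
    have h2 := hind.integral_fun_mul_eq_mul_integral (hY_mem i).aestronglyMeasurable
      (hY_mem j).aestronglyMeasurable
    have h3 : ∫ ω, Y i ω * Y j ω ∂ℙ = (∫ ω, Y i ω ∂ℙ) * ∫ ω, Y j ω ∂ℙ := h2
    rw [h3, hY_mean i, hY_mean j, mul_zero]
  have hsum_mem : ∀ w : Fin N → ℝ, MemLp (fun ω => ∑ i, w i * Y i ω) 2 ℙ := by
    intro w
    have h := memLp_finset_sum' (μ := (ℙ : Measure Ω)) (p := 2) Finset.univ
      (f := fun i ω => w i * Y i ω) (fun i _ => (hY_mem i).const_mul (w i))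
    rwa [Finset.sum_fn] at h
  -- the key second-moment identity for linear combinations
  have L1 : ∀ w : Fin N → ℝ,
      ∫ ω, (∑ i, w i * Y i ω) ^ 2 ∂ℙ = (∑ i, w i ^ 2) * σ2 := by
    intro w
    have expand : ∀ ω : Ω, (∑ i, w i * Y i ω) ^ 2
        = ∑ i, ∑ j, (w i * w j) * (Y i ω * Y j ω) := by
      intro ω
      rw [sq, Finset.sum_mul_sum]
      exact Finset.sum_congr rfl fun i _ => Finset.sum_congr rfl fun j _ => by ring
    calc ∫ ω, (∑ i, w i * Y i ω) ^ 2 ∂ℙ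
        = ∫ ω, ∑ i, ∑ j, (w i * w j) * (Y i ω * Y j ω) ∂ℙ :=
          integral_congr_ae (Filter.Eventually.of_forall expand)
      _ = ∑ i, ∫ ω, ∑ j, (w i * w j) * (Y i ω * Y j ω) ∂ℙ :=
          integral_finset_sum _ fun i _ =>
            integrable_finset_sum _ fun j _ => ((hYY_int i j).const_mul _)
      _ = ∑ i, ∑ j, ∫ ω, (w i * w j) * (Y i ω * Y j ω) ∂ℙ :=
          Finset.sum_congr rfl fun i _ =>
            integral_finset_sum _ fun j _ => ((hYY_int i j).const_mul _)
      _ = ∑ i, w i ^ 2 * σ2 := by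
          refine Finset.sum_congr rfl fun i _ => ?_
          rw [Finset.sum_eq_single i]
          · rw [integral_const_mul]
            have h : ∫ ω, Y i ω * Y i ω ∂ℙ = σ2 := by
              simpa [sq] using hY_sq i
            rw [h]; ring
          · intro j _ hj
            rw [integral_const_mul, hYY_zero i j (Ne.symm hj), mul_zero]
          · intro h; exact absurd (Finset.mem_univ i) h
      _ = (∑ i, w i ^ 2) * σ2 := by rw [Finset.sum_mul]
  -- the set of batches
  set P : Finset (Finset (Fin N)) := Finset.powersetCard M (Finset.univ : Finset (Fin N))
    with hP_def
  have hPcard_pos : 0 < P.card := by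
    rw [hP_def, Finset.card_powersetCard, Finset.card_univ, Fintype.card_fin]
    exact Nat.choose_pos hMN.le
  have hPcardR : (0:ℝ) < (P.card : ℝ) := by exact_mod_cast hPcard_pos
  have hcard_s : ∀ s ∈ P, s.card = M := fun s hs => (Finset.mem_powersetCard.1 hs).2
  -- batch weights
  set w : Finset (Fin N) → Fin N → ℝ := fun s i => if i ∈ s then -(M:ℝ)⁻¹ else 0 with hw_def
  have hw_sum_sq : ∀ s ∈ P, (∑ i, w s i ^ 2) = (M:ℝ)⁻¹ := by
    intro s hs
    have h1 : ∀ i : Fin N, w s i ^ 2 = if i ∈ s then ((M:ℝ)⁻¹)^2 else 0 := by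
      intro i; simp only [hw_def]; split_ifs <;> simp
    rw [Finset.sum_congr rfl fun i _ => h1 i, Finset.sum_ite_mem, Finset.univ_inter,
      Finset.sum_const, hcard_s s hs, nsmul_eq_mul]
    rw [sq, ← mul_assoc, mul_inv_cancel₀ hMR.ne', one_mul]
  have hpoint : ∀ ω : Ω, ∑ i, w (S ω) i * Y i ω
      = m - (M:ℝ)⁻¹ * ∑ j ∈ S ω, φm (X j ω) := by
    intro ω
    have hcard : (((S ω).card : ℕ) : ℝ) = (M:ℝ) := by
      exact_mod_cast congrArg (Nat.cast : ℕ → ℝ) (hcard_s _ (hSval ω))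
    calc ∑ i, w (S ω) i * Y i ω
        = ∑ i, (if i ∈ S ω then -(M:ℝ)⁻¹ * Y i ω else 0) :=
          Finset.sum_congr rfl fun i _ => by
            simp only [hw_def, ite_mul, zero_mul]
      _ = ∑ i ∈ Finset.univ ∩ S ω, -(M:ℝ)⁻¹ * Y i ω := Finset.sum_ite_mem _ _ _
      _ = -(M:ℝ)⁻¹ * ∑ i ∈ S ω, Y i ω := by rw [Finset.univ_inter, Finset.mul_sum]
      _ = -(M:ℝ)⁻¹ * ((∑ i ∈ S ω, φm (X i ω)) - (M:ℝ) * m) := by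
          simp only [hY_def]
          rw [Finset.sum_sub_distrib, Finset.sum_const, nsmul_eq_mul, hcard]
      _ = m - (M:ℝ)⁻¹ * ∑ j ∈ S ω, φm (X j ω) := by field_simp; ring
  -- a.e. replacement of φ by φm along the samples
  have hae : ∀ᵐ ω ∂ℙ, ∀ i, φ (X i ω) = φm (X i ω) := by
    rw [ae_all_iff]
    intro i
    exact ae_of_ae_map (hXmeas i).aemeasurable (by rw [hXlaw i]; exact hφm_ae)
  -- the LHS second moment equals σ2 / M
  have hI1 : ∫ ω, |(∫ p, φ p ∂μ) - (M:ℝ)⁻¹ * ∑ j ∈ S ω, φ (X j ω)| ^ 2 ∂ℙ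
      = (M:ℝ)⁻¹ * σ2 := by
    have hLHS_ae : ∀ᵐ ω ∂ℙ,
        |(∫ p, φ p ∂μ) - (M:ℝ)⁻¹ * ∑ j ∈ S ω, φ (X j ω)| ^ 2
          = (∑ i, w (S ω) i * Y i ω) ^ 2 := by
      filter_upwards [hae] with ω hω
      rw [hm_eq]
      have h : ∑ j ∈ S ω, φ (X j ω) = ∑ j ∈ S ω, φm (X j ω) :=
        Finset.sum_congr rfl fun j _ => hω j
      rw [h, ← hpoint ω, sq_abs]
    rw [integral_congr_ae hLHS_ae]
    -- split according to the value of S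
    have hsplit : ∀ ω : Ω, (∑ i, w (S ω) i * Y i ω)^2
        = ∑ s ∈ P, (if S ω = s then (1:ℝ) else 0) * (∑ i, w s i * Y i ω)^2 := by
      intro ω
      simp only [ite_mul, one_mul, zero_mul]
      rw [Finset.sum_ite_eq P (S ω) (fun s => (∑ i, w s i * Y i ω)^2), if_pos (hSval ω)]
    have hSsetmeas : ∀ s : Finset (Fin N), MeasurableSet (S ⁻¹' {s}) :=
      fun s => hSmeas (by trivial)
    have hind_eq : ∀ s : Finset (Fin N), (fun ω => if S ω = s then (1:ℝ) else 0)
        = Set.indicator (S ⁻¹' {s}) (fun _ => (1:ℝ)) := by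
      intro s; funext ω; simp [Set.indicator_apply, Set.mem_preimage]
    have hint_ind : ∀ s : Finset (Fin N),
        Integrable (fun ω => if S ω = s then (1:ℝ) else 0) ℙ := by
      intro s; rw [hind_eq s]
      exact (integrable_const (1:ℝ)).indicator (hSsetmeas s)
    have hint_ind_val : ∀ s ∈ P,
        ∫ ω, (if S ω = s then (1:ℝ) else 0) ∂ℙ = (P.card : ℝ)⁻¹ := by
      intro s hs
      rw [hind_eq s, integral_indicator_const (1:ℝ) (hSsetmeas s), smul_eq_mul, mul_one,
        measureReal_def, hSunif s hs]
      simp [ENNReal.toReal_inv]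
    have hind : ∀ s : Finset (Fin N),
        IndepFun (fun ω => if S ω = s then (1:ℝ) else 0)
          (fun ω => (∑ i, w s i * Y i ω)^2) ℙ := by
      intro s
      have h1 : @Measurable (Finset (Fin N)) ℝ ⊤ _ (fun t => if t = s then (1:ℝ) else 0) :=
        measurable_from_top
      have h2 : Measurable (fun x : Fin N → E => (∑ i, w s i * (φm (x i) - m))^2) :=
        (Finset.measurable_sum _ fun i _ =>
          (measurable_const.mul
            ((hφm_meas.comp (measurable_pi_apply i)).sub measurable_const))).pow_const 2
      exact hSindep.comp h1 h2
    have hHint : ∀ s : Finset (Fin N), Integrable (fun ω => (∑ i, w s i * Y i ω)^2) ℙ :=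
      fun s => (hsum_mem (w s)).integrable_sq
    calc ∫ ω, (∑ i, w (S ω) i * Y i ω)^2 ∂ℙ
        = ∫ ω, ∑ s ∈ P, (if S ω = s then (1:ℝ) else 0) * (∑ i, w s i * Y i ω)^2 ∂ℙ :=
          integral_congr_ae (Filter.Eventually.of_forall hsplit)
      _ = ∑ s ∈ P, ∫ ω, (if S ω = s then (1:ℝ) else 0) * (∑ i, w s i * Y i ω)^2 ∂ℙ :=
          integral_finset_sum _ fun s _ => (hind s).integrable_mul (hint_ind s) (hHint s)
      _ = ∑ s ∈ P, (∫ ω, (if S ω = s then (1:ℝ) else 0) ∂ℙ)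
            * ∫ ω, (∑ i, w s i * Y i ω)^2 ∂ℙ :=
          Finset.sum_congr rfl fun s _ =>
            (hind s).integral_fun_mul_eq_mul_integral (hint_ind s).aestronglyMeasurable
              (hHint s).aestronglyMeasurable
      _ = ∑ _s ∈ P, (P.card : ℝ)⁻¹ * ((M:ℝ)⁻¹ * σ2) := by
          refine Finset.sum_congr rfl fun s hs => ?_
          rw [hint_ind_val s hs, L1 (w s), hw_sum_sq s hs]
      _ = (M:ℝ)⁻¹ * σ2 := by
          rw [Finset.sum_const, nsmul_eq_mul, ← mul_assoc,
            mul_inv_cancel₀ hPcardR.ne', one_mul]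
  -- the empirical variance has mean (1 - 1/N) σ2
  set v : Fin N → Fin N → ℝ := fun i j => (if j = i then 1 else 0) - (N:ℝ)⁻¹ with hv_def
  have hv_sum_sq : ∀ i, (∑ j, v i j ^ 2) = 1 - (N:ℝ)⁻¹ := by
    intro i
    have h1 : ∀ j : Fin N, v i j ^ 2
        = (if j = i then (1:ℝ) - 2*(N:ℝ)⁻¹ else 0) + ((N:ℝ)⁻¹)^2 := by
      intro j; simp only [hv_def]; split_ifs <;> ring
    rw [Finset.sum_congr rfl fun j _ => h1 j, Finset.sum_add_distrib,
      Finset.sum_ite_eq' Finset.univ i (fun _ => (1:ℝ) - 2*(N:ℝ)⁻¹),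
      if_pos (Finset.mem_univ i), Finset.sum_const, Finset.card_univ, Fintype.card_fin,
      nsmul_eq_mul]
    field_simp
    ring
  have hpoint2 : ∀ ω : Ω, ∀ i : Fin N,
      ∑ j, v i j * Y j ω = φm (X i ω) - (N:ℝ)⁻¹ * ∑ j, φm (X j ω) := by
    intro ω i
    have hsum : ∑ j, v i j * Y j ω = Y i ω - (N:ℝ)⁻¹ * ∑ j, Y j ω := by
      simp only [hv_def, sub_mul, ite_mul, one_mul, zero_mul]
      rw [Finset.sum_sub_distrib, Finset.sum_ite_eq' Finset.univ i (fun j => Y j ω),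
        if_pos (Finset.mem_univ i), Finset.mul_sum]
    rw [hsum]
    simp only [hY_def]
    rw [Finset.sum_sub_distrib, Finset.sum_const, Finset.card_univ, Fintype.card_fin,
      nsmul_eq_mul]
    field_simp
    ring
  have hI2 : ∫ ω, (N:ℝ)⁻¹ * ∑ i, (φ (X i ω) - (N:ℝ)⁻¹ * ∑ j, φ (X j ω)) ^ 2 ∂ℙ
      = (1 - (N:ℝ)⁻¹) * σ2 := by
    have hae2 : ∀ᵐ ω ∂ℙ, (N:ℝ)⁻¹ * ∑ i, (φ (X i ω) - (N:ℝ)⁻¹ * ∑ j, φ (X j ω)) ^ 2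
        = (N:ℝ)⁻¹ * ∑ i, (∑ j, v i j * Y j ω) ^ 2 := by
      filter_upwards [hae] with ω hω
      congr 1
      refine Finset.sum_congr rfl fun i _ => ?_
      rw [hω i, Finset.sum_congr rfl fun j _ => by rw [hω j], hpoint2 ω i]
    rw [integral_congr_ae hae2, integral_const_mul,
      integral_finset_sum _ (fun i _ => (hsum_mem (v i)).integrable_sq),
      Finset.sum_congr rfl fun i _ => by rw [L1 (v i), hv_sum_sq i],
      Finset.sum_const, Finset.card_univ, Fintype.card_fin, nsmul_eq_mul,
      ← mul_assoc, inv_mul_cancel₀ hNR.ne', one_mul]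
  -- put everything together
  rw [hI1, hσ2_eq, hI2, ← Real.sqrt_eq_rpow, ← Real.sqrt_eq_rpow]
  have hb : (0:ℝ) ≤ (M:ℝ)⁻¹ - (N:ℝ)⁻¹ :=
    sub_nonneg.2 (inv_anti₀ hMR hMNR)
  have ha_half : (N:ℝ)⁻¹ ≤ 2⁻¹ := inv_anti₀ (by norm_num) hN2
  have step1 : Real.sqrt ((M:ℝ)⁻¹ * σ2)
      ≤ Real.sqrt ((N:ℝ)⁻¹ * σ2) + Real.sqrt (((M:ℝ)⁻¹ - (N:ℝ)⁻¹) * σ2) := by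
    have h : (M:ℝ)⁻¹ * σ2 = (N:ℝ)⁻¹ * σ2 + ((M:ℝ)⁻¹ - (N:ℝ)⁻¹) * σ2 := by ring
    rw [h]
    exact rbm_sqrt_add_le (by positivity) (mul_nonneg hb hσ2_nonneg)
  have step2 : Real.sqrt ((N:ℝ)⁻¹ * σ2) ≤ Real.sqrt 2 * Real.sqrt σ2 / Real.sqrt (N:ℝ) := by
    have h : Real.sqrt 2 * Real.sqrt σ2 / Real.sqrt (N:ℝ) = Real.sqrt (2 * σ2 / (N:ℝ)) := by
      rw [Real.sqrt_div (by positivity), Real.sqrt_mul (by norm_num)]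
    rw [h]
    apply Real.sqrt_le_sqrt
    rw [div_eq_mul_inv]
    nlinarith [mul_nonneg (inv_nonneg.2 hNR.le) hσ2_nonneg]
  have h1a : (0:ℝ) ≤ 1 - (N:ℝ)⁻¹ := by
    have h1 : (N:ℝ)⁻¹ ≤ 1 := by
      rw [inv_le_one_iff₀]; right; linarith
    linarith
  have step3 : Real.sqrt (((M:ℝ)⁻¹ - (N:ℝ)⁻¹) * σ2)
      ≤ Real.sqrt 2 * Real.sqrt ((1 - (N:ℝ)⁻¹) * σ2) * Real.sqrt ((M:ℝ)⁻¹ - (N:ℝ)⁻¹) := by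
    have h : Real.sqrt (2 * ((1 - (N:ℝ)⁻¹) * σ2) * ((M:ℝ)⁻¹ - (N:ℝ)⁻¹))
        = Real.sqrt 2 * Real.sqrt ((1 - (N:ℝ)⁻¹) * σ2) * Real.sqrt ((M:ℝ)⁻¹ - (N:ℝ)⁻¹) := by
      rw [Real.sqrt_mul (mul_nonneg (by norm_num) (mul_nonneg h1a hσ2_nonneg)),
        Real.sqrt_mul (by norm_num : (0:ℝ) ≤ 2)]
    rw [← h]
    apply Real.sqrt_le_sqrt
    nlinarith [mul_nonneg (mul_nonneg hb hσ2_nonneg)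
      (by linarith : (0:ℝ) ≤ 1 - 2*(N:ℝ)⁻¹)]
  calc Real.sqrt ((M:ℝ)⁻¹ * σ2)
      ≤ Real.sqrt ((N:ℝ)⁻¹ * σ2) + Real.sqrt (((M:ℝ)⁻¹ - (N:ℝ)⁻¹) * σ2) := step1
    _ ≤ Real.sqrt 2 * Real.sqrt σ2 / Real.sqrt (N:ℝ)
        + Real.sqrt 2 * Real.sqrt ((1 - (N:ℝ)⁻¹) * σ2) * Real.sqrt ((M:ℝ)⁻¹ - (N:ℝ)⁻¹) :=
      add_le_add step2 step3
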